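/- Let A = {a₁,…,aₙ}, let B be a finite alphabet with A ⊆ B and B disjoint from {x,y}, and let φ : A* → {x,y}* be the monoid homomorphism determined by φ(aᵢ) = x x yⁱ x y^{n+1−i}. Let Q be a rewriting system on B, and let E = { (φ(a), a) : a ∈ A }, a rewriting system on the alphabet {x,y} ∪ B. Then the rewriting system (B, Q) is complete (terminating and confluent) if and only if the rewriting system ({x,y} ∪ B, Q ∪ E) is complete. -/

import Mathlib

inductive XY : Type
  | x : XY
  | y : XY

open XY

def Step {α : Type*} (R : Set (List α × List α)) (u v : List α) : Prop :=
  ∃ x y l r, (l, r) ∈ R ∧ u = x ++ l ++ y ∧ v = x ++ r ++ y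

def Terminating {α : Type*} (R : Set (List α × List α)) : Prop :=
  ¬ ∃ f : ℕ → List α, ∀ n : ℕ, Step R (f n) (f (n + 1))

def Confluent {α : Type*} (R : Set (List α × List α)) : Prop :=
  ∀ u v w : List α, Relation.ReflTransGen (Step R) u v →
    Relation.ReflTransGen (Step R) u w →
    ∃ z : List α, Relation.ReflTransGen (Step R) v z ∧
      Relation.ReflTransGen (Step R) w z

/-- The image of the letter `aᵢ` (for `i ∈ {1, …, n}`, encoded as `i : Fin n`
representing `a_{i+1}`): `φ(aᵢ) = x x yⁱ x y^{n+1−i}`. -/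
def code (n : ℕ) (i : Fin n) : List XY :=
  [x, x] ++ List.replicate (i.val + 1) y ++ [x] ++ List.replicate (n - i.val) y

/-! Termination: an `E`-step deletes letters `x`, `y`, while a `Q`-step keeps them and acts as a
`Q`-step on the letters of `B`, so (number of letters `x`, `y`, projection to `B*`) decreases
lexicographically. Confluence then follows from Newman's lemma once the critical pairs are joined.
Two `Q`-redexes overlap only inside `B*`, where confluence of `Q` joins them. A `Q`-redex and an
`E`-redex cannot overlap, since their letters are disjoint and a terminating system has no empty
left-hand side. The codewords `φ(aᵢ)` are infix-free and overlap-free, so two `E`-redexes either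
coincide or are disjoint. Conversely, no `E`-rule applies to a word of `B*`, so reductions of
`Q ∪ E` from such a word are `Q`-reductions. -/

open Relation Function

section Rewriting

variable {α β : Type*} {R S Q : Set (List α × List α)} {u v : List α}

def mapRules (f : α → β) (Q : Set (List α × List α)) : Set (List β × List β) :=
  {q | ∃ p ∈ Q, q = (p.1.map f, p.2.map f)}

theorem mem_mapRules {f : α → β} {l r : List β} :
    (l, r) ∈ mapRules f Q ↔ ∃ l₀ r₀, (l₀, r₀) ∈ Q ∧ l = l₀.map f ∧ r = r₀.map f := by
  simp [mapRules, Prod.ext_iff]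

theorem terminating_iff_wellFounded : Terminating R ↔ WellFounded (flip (Step R)) := by
  simp [Terminating, wellFounded_iff_isEmpty_descending_chain, isEmpty_subtype, flip]

theorem Terminating.lhs_ne_nil (hR : Terminating R) {l r : List α} (h : (l, r) ∈ R) :
    l ≠ [] := by
  rintro rfl
  exact hR ⟨fun k => (List.replicate k r).flatten,
    fun k => ⟨[], (List.replicate k r).flatten, [], r, h, by simp,
      by simp [List.replicate_succ]⟩⟩

theorem Relation.newman {r : α → α → Prop} (hwf : WellFounded (flip r))
    (hlc : ∀ a b c, r a b → r a c → Join (ReflTransGen r) b c) {a b c : α}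
    (hab : ReflTransGen r a b) (hac : ReflTransGen r a c) : Join (ReflTransGen r) b c := by
  induction a using hwf.induction generalizing b c with
  | _ a ih =>
    rcases hab.cases_head with rfl | ⟨b₁, hab₁, hb₁b⟩
    · exact ⟨c, hac, .refl⟩
    rcases hac.cases_head with rfl | ⟨c₁, hac₁, hc₁c⟩
    · exact ⟨b, .refl, hab⟩
    obtain ⟨d, hb₁d, hc₁d⟩ := hlc a b₁ c₁ hab₁ hac₁
    obtain ⟨e, hbe, hde⟩ := ih b₁ hab₁ hb₁b hb₁d
    obtain ⟨z, hcz, hez⟩ := ih c₁ hac₁ hc₁c (hc₁d.trans hde)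
    exact ⟨z, hbe.trans hez, hcz⟩

theorem Relation.Join.reflTransGen_lift {r : α → α → Prop} {p : β → β → Prop} (f : α → β)
    (hf : ∀ a b, r a b → p (f a) (f b)) {a b : α} (h : Join (ReflTransGen r) a b) :
    Join (ReflTransGen p) (f a) (f b) :=
  let ⟨c, hac, hbc⟩ := h
  ⟨f c, hac.lift f hf, hbc.lift f hf⟩

namespace Step

theorem of_mem {l r : List α} (h : (l, r) ∈ R) : Step R l r :=
  ⟨[], [], l, r, h, by simp, by simp⟩

theorem append_append (h : Step R u v) (c d : List α) : Step R (c ++ u ++ d) (c ++ v ++ d) := by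
  obtain ⟨c', d', l, r, hlr, rfl, rfl⟩ := h
  exact ⟨c ++ c', d' ++ d, l, r, hlr, by simp, by simp⟩

theorem mono (hRS : R ⊆ S) (h : Step R u v) : Step S u v :=
  let ⟨c, d, l, r, hlr, hu, hv⟩ := h
  ⟨c, d, l, r, hRS hlr, hu, hv⟩

theorem union_iff : Step (R ∪ S) u v ↔ Step R u v ∨ Step S u v := by
  constructor
  · rintro ⟨c, d, l, r, hR | hS, hu, hv⟩
    exacts [.inl ⟨c, d, l, r, hR, hu, hv⟩, .inr ⟨c, d, l, r, hS, hu, hv⟩]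
  · rintro (h | h)
    exacts [h.mono Set.subset_union_left, h.mono Set.subset_union_right]

theorem map (f : α → β) (h : Step Q u v) : Step (mapRules f Q) (u.map f) (v.map f) := by
  obtain ⟨c, d, l, r, hlr, rfl, rfl⟩ := h
  exact ⟨c.map f, d.map f, l.map f, r.map f, ⟨_, hlr, rfl⟩, by simp, by simp⟩

theorem exists_of_map {f : α → β} (hf : Injective f) {v : List β}
    (h : Step (mapRules f Q) (u.map f) v) : ∃ v₀, v = v₀.map f ∧ Step Q u v₀ := by
  obtain ⟨c, d, l, r, hlr, hu, rfl⟩ := h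
  obtain ⟨l₀, r₀, hq, rfl, rfl⟩ := mem_mapRules.mp hlr
  obtain ⟨u₁, d₀, rfl, hu₁, rfl⟩ := List.map_eq_append_iff.mp hu
  obtain ⟨c₀, l₀', rfl, rfl, hl₀⟩ := List.map_eq_append_iff.mp hu₁
  obtain rfl := List.map_injective_iff.mpr hf hl₀
  exact ⟨c₀ ++ r₀ ++ d₀, by simp, ⟨c₀, d₀, l₀', r₀, hq, rfl, rfl⟩⟩

theorem join_append_append (h : Join (ReflTransGen (Step R)) u v) (c d : List α) :
    Join (ReflTransGen (Step R)) (c ++ u ++ d) (c ++ v ++ d) :=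
  h.reflTransGen_lift (c ++ · ++ d) fun _ _ h => h.append_append c d

theorem join_mono (hRS : R ⊆ S) (h : Join (ReflTransGen (Step R)) u v) :
    Join (ReflTransGen (Step S)) u v :=
  h.reflTransGen_lift id fun _ _ h => h.mono hRS

theorem join_map (f : α → β) (h : Join (ReflTransGen (Step Q)) u v) :
    Join (ReflTransGen (Step (mapRules f Q))) (u.map f) (v.map f) :=
  h.reflTransGen_lift (List.map f) fun _ _ h => h.map f

end Step

end Rewriting

section CriticalPairs

variable {α : Type*} {R : Set (List α × List α)} {l₁ r₁ l₂ r₂ : List α}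

theorem Step.join_of_disjoint (h₁ : (l₁, r₁) ∈ R) (h₂ : (l₂, r₂) ∈ R) (c m d : List α) :
    Join (ReflTransGen (Step R)) (c ++ r₁ ++ m ++ l₂ ++ d) (c ++ l₁ ++ m ++ r₂ ++ d) := by
  refine ⟨c ++ r₁ ++ m ++ r₂ ++ d, .single ?_, .single ?_⟩
  · exact (Step.of_mem h₂).append_append (c ++ r₁ ++ m) d
  · simpa only [List.append_assoc] using (Step.of_mem h₁).append_append c (m ++ r₂ ++ d)

variable
    (hoverlap : ∀ ⦃l₁ r₁ l₂ r₂⦄, (l₁, r₁) ∈ R → (l₂, r₂) ∈ R → ∀ p s t, s ≠ [] →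
      l₁ = p ++ s → l₂ = s ++ t → Join (ReflTransGen (Step R)) (r₁ ++ t) (p ++ r₂))
    (hnest : ∀ ⦃l₁ r₁ l₂ r₂⦄, (l₁, r₁) ∈ R → (l₂, r₂) ∈ R → ∀ p t,
      l₁ = p ++ l₂ ++ t → Join (ReflTransGen (Step R)) r₁ (p ++ r₂ ++ t))
include hoverlap hnest

theorem Step.join_of_criticalPairs_of_prefix (h₁ : (l₁, r₁) ∈ R) (h₂ : (l₂, r₂) ∈ R)
    {c p d₁ d₂ : List α} (h : l₁ ++ d₁ = p ++ (l₂ ++ d₂)) :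
    Join (ReflTransGen (Step R)) (c ++ r₁ ++ d₁) (c ++ p ++ r₂ ++ d₂) := by
  rcases List.append_eq_append_iff.mp h with ⟨m, rfl, rfl⟩ | ⟨s, rfl, hs⟩
  · simpa only [List.append_assoc] using Step.join_of_disjoint h₁ h₂ c m d₂
  rcases List.append_eq_append_iff.mp hs with ⟨t, rfl, rfl⟩ | ⟨t, rfl, rfl⟩
  · simpa only [List.append_assoc] using
      Step.join_append_append (hnest h₁ h₂ p t (List.append_assoc _ _ _).symm) c d₁
  · rcases eq_or_ne s [] with rfl | hs
    · simpa only [List.append_assoc, List.nil_append] using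
        Step.join_of_disjoint h₁ h₂ c [] d₂
    · simpa only [List.append_assoc] using
        Step.join_append_append (hoverlap h₁ h₂ p s t hs rfl rfl) c d₂

theorem Step.join_of_criticalPairs {u v w : List α} (hv : Step R u v) (hw : Step R u w) :
    Join (ReflTransGen (Step R)) v w := by
  obtain ⟨c₁, d₁, l₁, r₁, h₁, rfl, rfl⟩ := hv
  obtain ⟨c₂, d₂, l₂, r₂, h₂, hu, rfl⟩ := hw
  simp only [List.append_assoc] at hu
  rcases List.append_eq_append_iff.mp hu with ⟨p, rfl, hp⟩ | ⟨p, rfl, hp⟩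
  · simpa only [List.append_assoc] using
      join_of_criticalPairs_of_prefix hoverlap hnest h₁ h₂ (c := c₁) hp
  · simpa only [List.append_assoc] using
      symm_of (Join _) (join_of_criticalPairs_of_prefix hoverlap hnest h₂ h₁ (c := c₂) hp)

end CriticalPairs

section MapRules

variable {α β : Type*} {Q : Set (List α × List α)} {f : α → β}

theorem Terminating.of_mapRules_subset {S : Set (List β × List β)}
    (hS : Terminating S) (hQS : mapRules f Q ⊆ S) : Terminating Q :=
  fun ⟨u, hu⟩ => hS ⟨fun k => (u k).map f, fun k => ((hu k).map f).mono hQS⟩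

theorem Step.join_of_map (hf : Injective f) (hQ : Confluent Q) {u : List α}
    {v v' : List β} (hv : Step (mapRules f Q) (u.map f) v)
    (hv' : Step (mapRules f Q) (u.map f) v') :
    Join (ReflTransGen (Step (mapRules f Q))) v v' := by
  obtain ⟨v₀, rfl, hv₀⟩ := Step.exists_of_map hf hv
  obtain ⟨v₀', rfl, hv₀'⟩ := Step.exists_of_map hf hv'
  exact Step.join_map f (hQ _ _ _ (.single hv₀) (.single hv₀'))

variable {p s t l₂ r₁ r₂ : List β}

theorem mapRules.join_of_overlap (hf : Injective f) (hQ : Confluent Q)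
    (h₁ : (p ++ s, r₁) ∈ mapRules f Q) (h₂ : (s ++ t, r₂) ∈ mapRules f Q) :
    Join (ReflTransGen (Step (mapRules f Q))) (r₁ ++ t) (p ++ r₂) := by
  obtain ⟨a, -, -, ha, -⟩ := mem_mapRules.mp h₁
  obtain ⟨b, -, -, hb, -⟩ := mem_mapRules.mp h₂
  obtain ⟨-, b₂, -, -, rfl⟩ := List.map_eq_append_iff.mp hb.symm
  have hu : (a ++ b₂).map f = p ++ s ++ b₂.map f := by rw [List.map_append, ha]
  refine Step.join_of_map hf hQ (u := a ++ b₂) ?_ ?_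
  · simpa [hu] using (Step.of_mem h₁).append_append [] (b₂.map f)
  · simpa [hu] using (Step.of_mem h₂).append_append p []

theorem mapRules.join_of_nested (hf : Injective f) (hQ : Confluent Q)
    (h₁ : (p ++ l₂ ++ t, r₁) ∈ mapRules f Q) (h₂ : (l₂, r₂) ∈ mapRules f Q) :
    Join (ReflTransGen (Step (mapRules f Q))) r₁ (p ++ r₂ ++ t) := by
  obtain ⟨a, -, -, ha, -⟩ := mem_mapRules.mp h₁
  refine Step.join_of_map hf hQ (u := a) ?_ ?_
  · simpa [← ha] using Step.of_mem h₁
  · simpa [← ha] using (Step.of_mem h₂).append_append p t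

end MapRules

section CodeFamilies

variable {ι γ β : Type*}

def InfixFree (w : ι → List γ) : Prop :=
  ∀ ⦃i j⦄, w i <:+: w j → i = j

def OverlapFree (w : ι → List γ) : Prop :=
  ∀ ⦃i j p s t⦄, w i = p ++ s → w j = s ++ t → p = [] ∨ s = [] ∨ t = []

variable {w : ι → List γ} {i j : ι} {p s t : List γ}

theorem InfixFree.map (hw : InfixFree w) {f : γ → β} (hf : Injective f) :
    InfixFree fun i => (w i).map f := by
  intro i j h
  obtain ⟨l, hl, hwl⟩ := List.infix_map_iff.mp h
  exact hw (List.map_injective_iff.mpr hf hwl ▸ hl)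

theorem OverlapFree.map (hw : OverlapFree w) {f : γ → β} (hf : Injective f) :
    OverlapFree fun i => (w i).map f := by
  intro i j p s t hi hj
  obtain ⟨p₀, s₀, hi₀, rfl, rfl⟩ := List.map_eq_append_iff.mp hi
  obtain ⟨s₀', t₀, hj₀, hs, rfl⟩ := List.map_eq_append_iff.mp hj
  obtain rfl := List.map_injective_iff.mpr hf hs
  simpa using hw hi₀ hj₀

theorem InfixFree.eq_of_eq_append_append (hw : InfixFree w) (h : w i = p ++ w j ++ t) :
    j = i ∧ p = [] ∧ t = [] := by
  obtain rfl := hw ⟨p, t, h.symm⟩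
  have hlen := congrArg List.length h
  simp only [List.length_append] at hlen
  exact ⟨rfl, List.length_eq_zero_iff.mp (by omega), List.length_eq_zero_iff.mp (by omega)⟩

theorem InfixFree.eq_of_overlap (hw : InfixFree w) (hw' : OverlapFree w) (hs : s ≠ [])
    (hi : w i = p ++ s) (hj : w j = s ++ t) : i = j ∧ p = [] ∧ t = [] := by
  rcases hw' hi hj with rfl | rfl | rfl
  · rw [List.nil_append] at hi
    subst hi
    obtain ⟨rfl, -, rfl⟩ := hw.eq_of_eq_append_append (p := []) (by simpa using hj)
    exact ⟨rfl, rfl, rfl⟩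
  · exact absurd rfl hs
  · rw [List.append_nil] at hj
    subst hj
    obtain ⟨rfl, rfl, -⟩ := hw.eq_of_eq_append_append (t := []) (by simpa using hi)
    exact ⟨rfl, rfl, rfl⟩

end CodeFamilies

section Decoding

variable {ι γ α : Type*}

/-- The system `E = {(φ(aᵢ), aᵢ)}` with `φ(aᵢ) = w i` and `aᵢ = g i`; next to it, `Q` acts on
`γ ⊕ α` as `mapRules Sum.inr Q`. -/
def decodeRules (w : ι → List γ) (g : ι → α) : Set (List (γ ⊕ α) × List (γ ⊕ α)) :=
  {q | ∃ i, q = ((w i).map Sum.inl, [Sum.inr (g i)])}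

variable {Q : Set (List α × List α)} {w : ι → List γ} {g : ι → α}
  {l₁ l₂ r₁ r₂ p s t : List (γ ⊕ α)}

theorem mem_decodeRules :
    (l₁, r₁) ∈ decodeRules w g ↔ ∃ i, l₁ = (w i).map Sum.inl ∧ r₁ = [Sum.inr (g i)] := by
  simp [decodeRules, Prod.ext_iff]

theorem disjoint_of_mem_mapRules_of_mem_decodeRules (h₁ : (l₁, r₁) ∈ mapRules Sum.inr Q)
    (h₂ : (l₂, r₂) ∈ decodeRules w g) : l₁.Disjoint l₂ := by
  obtain ⟨a, -, -, rfl, -⟩ := mem_mapRules.mp h₁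
  obtain ⟨i, rfl, -⟩ := mem_decodeRules.mp h₂
  intro z hz₁ hz₂
  simp only [List.mem_map] at hz₁ hz₂
  obtain ⟨_, -, rfl⟩ := hz₁
  obtain ⟨_, -, h⟩ := hz₂
  exact Sum.inl_ne_inr h

theorem Step.countP_isLeft_lt (hw : ∀ i, w i ≠ []) {u v : List (γ ⊕ α)}
    (h : Step (decodeRules w g) u v) : v.countP Sum.isLeft < u.countP Sum.isLeft := by
  obtain ⟨c, d, l, r, hlr, rfl, rfl⟩ := h
  obtain ⟨i, rfl, rfl⟩ := mem_decodeRules.mp hlr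
  simp [List.countP_map, Function.comp_def, List.length_pos_iff, hw i]

theorem Step.countP_isLeft_eq {u v : List (γ ⊕ α)} (h : Step (mapRules Sum.inr Q) u v) :
    v.countP Sum.isLeft = u.countP Sum.isLeft := by
  obtain ⟨c, d, l, r, hlr, rfl, rfl⟩ := h
  obtain ⟨l₀, r₀, -, rfl, rfl⟩ := mem_mapRules.mp hlr
  simp [List.countP_map, Function.comp_def]

theorem Step.filterMap_getRight? {u v : List (γ ⊕ α)} (h : Step (mapRules Sum.inr Q) u v) :
    Step Q (u.filterMap Sum.getRight?) (v.filterMap Sum.getRight?) := by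
  obtain ⟨c, d, l, r, hlr, rfl, rfl⟩ := h
  obtain ⟨l₀, r₀, hq, rfl, rfl⟩ := mem_mapRules.mp hlr
  exact ⟨c.filterMap Sum.getRight?, d.filterMap Sum.getRight?, l₀, r₀, hq,
    by simp [List.filterMap_map, Function.comp_def], by simp [List.filterMap_map, Function.comp_def]⟩

theorem Terminating.mapRules_inr_union_decodeRules (hQ : Terminating Q) (hw : ∀ i, w i ≠ [])
    (g : ι → α) : Terminating (mapRules (Sum.inr : α → γ ⊕ α) Q ∪ decodeRules w g) := by
  rw [terminating_iff_wellFounded] at hQ ⊢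
  refine Subrelation.wf ?_ <| InvImage.wf
    (fun u => (u.countP Sum.isLeft, u.filterMap Sum.getRight?)) (wellFounded_lt.prod_lex hQ)
  intro v u h
  rcases Step.union_iff.mp h with h | h
  · rw [InvImage, h.countP_isLeft_eq]
    exact Prod.Lex.right _ h.filterMap_getRight?
  · exact Prod.Lex.left _ _ (h.countP_isLeft_lt hw)

theorem decodeRules.eq_of_overlap (hinf : InfixFree w) (hov : OverlapFree w) (hs : s ≠ [])
    (h₁ : (p ++ s, r₁) ∈ decodeRules w g) (h₂ : (s ++ t, r₂) ∈ decodeRules w g) :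
    r₁ ++ t = p ++ r₂ := by
  obtain ⟨i, hi, rfl⟩ := mem_decodeRules.mp h₁
  obtain ⟨j, hj, rfl⟩ := mem_decodeRules.mp h₂
  obtain ⟨rfl, rfl, rfl⟩ := (hinf.map Sum.inl_injective).eq_of_overlap
    (hov.map Sum.inl_injective) hs hi.symm hj.symm
  rfl

theorem decodeRules.eq_of_nested (hinf : InfixFree w)
    (h₁ : (p ++ l₂ ++ t, r₁) ∈ decodeRules w g) (h₂ : (l₂, r₂) ∈ decodeRules w g) :
    r₁ = p ++ r₂ ++ t := by
  obtain ⟨i, hi, rfl⟩ := mem_decodeRules.mp h₁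
  obtain ⟨j, rfl, rfl⟩ := mem_decodeRules.mp h₂
  obtain ⟨rfl, rfl, rfl⟩ := (hinf.map Sum.inl_injective).eq_of_eq_append_append hi.symm
  rfl

theorem Step.join_of_mapRules_inr_union_decodeRules (hinf : InfixFree w) (hov : OverlapFree w)
    (hQ : Confluent Q) (hR : Terminating (mapRules Sum.inr Q ∪ decodeRules w g))
    {u v v' : List (γ ⊕ α)} (hv : Step (mapRules Sum.inr Q ∪ decodeRules w g) u v)
    (hv' : Step (mapRules Sum.inr Q ∪ decodeRules w g) u v') :
    Join (ReflTransGen (Step (mapRules Sum.inr Q ∪ decodeRules w g))) v v' := by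
  refine Step.join_of_criticalPairs ?_ ?_ hv hv'
  · rintro l₁ r₁ l₂ r₂ h₁ h₂ p s t hs rfl rfl
    obtain ⟨z, hz⟩ := List.exists_mem_of_ne_nil s hs
    have hz₁ : z ∈ p ++ s := List.mem_append_right p hz
    have hz₂ : z ∈ s ++ t := List.mem_append_left t hz
    rcases h₁ with h₁ | h₁ <;> rcases h₂ with h₂ | h₂
    · exact Step.join_mono Set.subset_union_left
        (mapRules.join_of_overlap Sum.inr_injective hQ h₁ h₂)
    · exact (disjoint_of_mem_mapRules_of_mem_decodeRules h₁ h₂ hz₁ hz₂).elim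
    · exact (disjoint_of_mem_mapRules_of_mem_decodeRules h₂ h₁ hz₂ hz₁).elim
    · rw [decodeRules.eq_of_overlap hinf hov hs h₁ h₂]
      exact ⟨_, .refl, .refl⟩
  · rintro l₁ r₁ l₂ r₂ h₁ h₂ p t rfl
    obtain ⟨z, hz₂⟩ := List.exists_mem_of_ne_nil l₂ (hR.lhs_ne_nil h₂)
    have hz₁ : z ∈ p ++ l₂ ++ t := List.mem_append_left t (List.mem_append_right p hz₂)
    rcases h₁ with h₁ | h₁ <;> rcases h₂ with h₂ | h₂
    · exact Step.join_mono Set.subset_union_left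
        (mapRules.join_of_nested Sum.inr_injective hQ h₁ h₂)
    · exact (disjoint_of_mem_mapRules_of_mem_decodeRules h₁ h₂ hz₁ hz₂).elim
    · exact (disjoint_of_mem_mapRules_of_mem_decodeRules h₂ h₁ hz₂ hz₁).elim
    · rw [decodeRules.eq_of_nested hinf h₁ h₂]
      exact ⟨_, .refl, .refl⟩

theorem Step.mapRules_of_map_inr (hw : ∀ i, w i ≠ []) {u : List α} {v : List (γ ⊕ α)}
    (h : Step (mapRules Sum.inr Q ∪ decodeRules w g) (u.map Sum.inr) v) :
    Step (mapRules Sum.inr Q) (u.map Sum.inr) v := by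
  refine (Step.union_iff.mp h).resolve_right ?_
  rintro ⟨c, d, l, r, hlr, hu, -⟩
  obtain ⟨i, rfl, -⟩ := mem_decodeRules.mp hlr
  obtain ⟨a, ha⟩ := List.exists_mem_of_ne_nil _ (hw i)
  have : Sum.inl a ∈ u.map Sum.inr := by simp [hu, ha]
  simp at this

theorem ReflTransGen.exists_of_map_inr (hw : ∀ i, w i ≠ []) {u : List α} {v : List (γ ⊕ α)}
    (h : ReflTransGen (Step (mapRules Sum.inr Q ∪ decodeRules w g)) (u.map Sum.inr) v) :
    ∃ v₀, v = v₀.map Sum.inr ∧ ReflTransGen (Step Q) u v₀ := by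
  induction h with
  | refl => exact ⟨u, rfl, .refl⟩
  | tail _ hvw ih =>
    obtain ⟨v₀, rfl, huv₀⟩ := ih
    obtain ⟨w₀, rfl, hv₀w₀⟩ := (Step.mapRules_of_map_inr hw hvw).exists_of_map Sum.inr_injective
    exact ⟨w₀, rfl, huv₀.tail hv₀w₀⟩

theorem Confluent.of_mapRules_inr_union_decodeRules (hw : ∀ i, w i ≠ [])
    (hR : Confluent (mapRules Sum.inr Q ∪ decodeRules w g)) : Confluent Q := by
  intro u v v' huv huv'
  have lift := fun {a b : List α} (h : ReflTransGen (Step Q) a b) =>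
    h.lift (List.map (Sum.inr : α → γ ⊕ α))
      fun _ _ h => (h.map Sum.inr).mono (S := mapRules Sum.inr Q ∪ decodeRules w g)
        Set.subset_union_left
  obtain ⟨z, hvz, hv'z⟩ := hR _ _ _ (lift huv) (lift huv')
  obtain ⟨z₀, rfl, hvz₀⟩ := ReflTransGen.exists_of_map_inr hw hvz
  obtain ⟨z₀', hz, hv'z₀'⟩ := ReflTransGen.exists_of_map_inr hw hv'z
  obtain rfl := List.map_injective_iff.mpr Sum.inr_injective hz
  exact ⟨z₀, hvz₀, hv'z₀'⟩

theorem complete_iff_complete_mapRules_inr_union_decodeRules (hw : ∀ i, w i ≠ [])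
    (hinf : InfixFree w) (hov : OverlapFree w) (g : ι → α) (Q : Set (List α × List α)) :
    Terminating Q ∧ Confluent Q ↔
      Terminating (mapRules (Sum.inr : α → γ ⊕ α) Q ∪ decodeRules w g) ∧
        Confluent (mapRules (Sum.inr : α → γ ⊕ α) Q ∪ decodeRules w g) := by
  constructor
  · rintro ⟨hQT, hQC⟩
    have hRT := hQT.mapRules_inr_union_decodeRules hw g
    exact ⟨hRT, fun _ _ _ => Relation.newman (terminating_iff_wellFounded.mp hRT)
      fun _ _ _ => Step.join_of_mapRules_inr_union_decodeRules hinf hov hQC hRT⟩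
  · rintro ⟨hRT, hRC⟩
    exact ⟨hRT.of_mapRules_subset Set.subset_union_left,
      hRC.of_mapRules_inr_union_decodeRules hw⟩

end Decoding

instance : DecidableEq XY
  | x, x => isTrue rfl
  | x, y => isFalse nofun
  | y, x => isFalse nofun
  | y, y => isTrue rfl

theorem code_eq_cons (n : ℕ) (i : Fin n) :
    code n i = x :: x :: y :: (List.replicate i y ++ x :: List.replicate (n - i) y) := by
  simp [code, List.replicate_succ]

theorem code_length (n : ℕ) (i : Fin n) : (code n i).length = n + 4 := by
  simp [code]
  omega

theorem code_ne_nil (n : ℕ) (i : Fin n) : code n i ≠ [] := by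
  simp [code_eq_cons]

theorem code_injective (n : ℕ) : Injective (code n) := by
  intro i j h
  have := congrArg (fun l => (l.drop 3).idxOf x) h
  simp [code_eq_cons, List.idxOf_append_of_notMem] at this
  exact Fin.ext this

theorem code_infixFree (n : ℕ) : InfixFree (code n) :=
  fun i j h => code_injective n (h.eq_of_length (by rw [code_length, code_length]))

theorem code_eq_append_y (n : ℕ) (i : Fin n) : ∃ c, code n i = c ++ [y] := by
  obtain ⟨k, hk⟩ : ∃ k, n - i = k + 1 := ⟨n - i - 1, by omega⟩
  exact ⟨[x, x] ++ List.replicate (i + 1) y ++ [x] ++ List.replicate k y,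
    by rw [code, hk, List.replicate_succ' (n := k)]; simp only [List.append_assoc]⟩

theorem code_overlapFree (n : ℕ) : OverlapFree (code n) := by
  intro i j p s t hi hj
  rcases s with _ | ⟨a, s⟩
  · exact .inr (.inl rfl)
  refine .inl ?_
  -- `s` begins like a codeword; codewords end in `y`, and contain `x x` only at the start.
  rw [code_eq_cons] at hj
  simp only [List.cons_append, List.cons.injEq] at hj
  obtain ⟨rfl, hj⟩ := hj
  rcases s with _ | ⟨b, s⟩
  · obtain ⟨c, hc⟩ := code_eq_append_y n i
    cases (List.append_inj' (hc.symm.trans hi) rfl).2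
  · obtain ⟨rfl, -⟩ := List.cons.inj hj
    rw [code_eq_cons] at hi
    rcases p with _ | ⟨c, _ | ⟨d, p⟩⟩
    · rfl
    · simp at hi
    · have := congrArg (List.count x) (List.tail_eq_of_cons_eq (List.tail_eq_of_cons_eq hi))
      simp [List.count_replicate] at this
      omega

theorem stmt_16_general {B : Type*} (n : ℕ) (incl : Fin n → B) (Q : Set (List B × List B)) :
    (Terminating Q ∧ Confluent Q) ↔
      (Terminating
          ({q : List (XY ⊕ B) × List (XY ⊕ B) |
              ∃ p ∈ Q, q = (p.1.map Sum.inr, p.2.map Sum.inr)} ∪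
           {q : List (XY ⊕ B) × List (XY ⊕ B) |
              ∃ i : Fin n, q = ((code n i).map Sum.inl, [Sum.inr (incl i)])}) ∧
       Confluent
          ({q : List (XY ⊕ B) × List (XY ⊕ B) |
              ∃ p ∈ Q, q = (p.1.map Sum.inr, p.2.map Sum.inr)} ∪
           {q : List (XY ⊕ B) × List (XY ⊕ B) |
              ∃ i : Fin n, q = ((code n i).map Sum.inl, [Sum.inr (incl i)])})) :=
  complete_iff_complete_mapRules_inr_union_decodeRules (code_ne_nil n) (code_infixFree n)
    (code_overlapFree n) incl Q

/-- Let `A = {a₁,…,aₙ} ⊆ B` (with `B` disjoint from `{x,y}`, realized by the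
sum type `XY ⊕ B`), let `Q` be a rewriting system on `B`, and let
`E = {(φ(a), a) : a ∈ A}` on the alphabet `{x,y} ∪ B`.  Then `(B, Q)` is
complete if and only if `({x,y} ∪ B, Q ∪ E)` is complete. -/
theorem stmt_16 {B : Type*} [Fintype B] (n : ℕ) (incl : Fin n → B)
    (hincl : Function.Injective incl) (Q : Set (List B × List B)) :
    (Terminating Q ∧ Confluent Q) ↔
      (Terminating
          ({q : List (XY ⊕ B) × List (XY ⊕ B) |
              ∃ p ∈ Q, q = (p.1.map Sum.inr, p.2.map Sum.inr)} ∪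
           {q : List (XY ⊕ B) × List (XY ⊕ B) |
              ∃ i : Fin n, q = ((code n i).map Sum.inl, [Sum.inr (incl i)])}) ∧
       Confluent
          ({q : List (XY ⊕ B) × List (XY ⊕ B) |
              ∃ p ∈ Q, q = (p.1.map Sum.inr, p.2.map Sum.inr)} ∪
           {q : List (XY ⊕ B) × List (XY ⊕ B) |
              ∃ i : Fin n, q = ((code n i).map Sum.inl, [Sum.inr (incl i)])})) :=
  stmt_16_general n incl Q
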